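/- For the embedded chain P of the M/G/1 queue with parameter 1 < z < 2 and the cost function c given by c(0) = 0 and c(i) = ((z−1)/z)^i for i ≥ 1, the potential is φ(i) = (1/(2−z) − (z²−z+1)/z^i)·(z−1)^{i−1} for every i. -/

import Mathlib

open scoped ENNReal
open Filter Topology

/-- Matrix powers of a nonnegative kernel on ℕ, values in `[0,∞]`. -/
noncomputable def matPow (P : ℕ → ℕ → ℝ≥0∞) : ℕ → ℕ → ℕ → ℝ≥0∞
  | 0, i, j => if i = j then 1 else 0
  | k + 1, i, j => ∑' l : ℕ, matPow P k i l * P l j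

/-- The potential `φ(i) = ∑_{k=0}^∞ ∑_j P^k(i,j) c(j)`. -/
noncomputable def potential (P : ℕ → ℕ → ℝ≥0∞) (c : ℕ → ℝ≥0∞) (i : ℕ) : ℝ≥0∞ :=
  ∑' k : ℕ, ∑' j : ℕ, matPow P k i j * c j

/-- The Green matrix `G(i,j) = ∑_{k=0}^∞ P^k(i,j)`. -/
noncomputable def green (P : ℕ → ℕ → ℝ≥0∞) (i j : ℕ) : ℝ≥0∞ :=
  ∑' k : ℕ, matPow P k i j

/-- `P_m^{(k+)} = ∑_{i=k}^∞ P(m,i)`. -/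
noncomputable def Pplus (P : ℕ → ℕ → ℝ≥0∞) (m k : ℕ) : ℝ≥0∞ :=
  ∑' l : ℕ, P m (k + l)

/-- `H P i m = H_m^{(i)}`: `H_i^{(i)} = 1` and
`H_m^{(i)} = (1/P(m,m-1)) ∑_{k=m+1}^{i} P_m^{(k+)} H_k^{(i)}` for `1 ≤ m < i`. -/
noncomputable def H (P : ℕ → ℕ → ℝ≥0∞) (i : ℕ) : ℕ → ℝ≥0∞
  | m =>
    if i ≤ m then 1
    else (P m (m - 1))⁻¹ *
      ∑ k ∈ (Finset.Ioc m i).attach, Pplus P m k.1 * H P i k.1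
  termination_by m => i - m
  decreasing_by
    have h := Finset.mem_Ioc.mp k.2
    omega

/-- The ratio `r_n(i) = (∑_{m=i+1}^n H_m^{(n)}) / (∑_{k=1}^n P_0^{(k+)} H_k^{(n)})`. -/
noncomputable def ratio (P : ℕ → ℕ → ℝ≥0∞) (i n : ℕ) : ℝ :=
  (∑ m ∈ Finset.Icc (i + 1) n, (H P n m).toReal) /
    (∑ k ∈ Finset.Icc 1 n, (Pplus P 0 k).toReal * (H P n k).toReal)

/-- The embedded chain of the `M/G/1` queue with parameter `z`:
`P(0,j) = a_j = (z-1)/z^(j+1)`, and for `i ≥ 1`, `P(i,j) = a_{j-i+1} = (z-1)/z^(j-i+2)`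
for `j ≥ i-1` and `P(i,j) = 0` for `j < i-1`. -/
noncomputable def mG1 (z : ℝ) : ℕ → ℕ → ℝ≥0∞ := fun i j =>
  if i = 0 then ENNReal.ofReal ((z - 1) / z ^ (j + 1))
  else if i - 1 ≤ j then ENNReal.ofReal ((z - 1) / z ^ (j - (i - 1) + 1))
  else 0

/-! The potential `φ = ∑ₖ Pᵏ c` is the least solution in `[0, ∞]` of `φ = c + Pφ`, so it lies
below any explicit solution `ψ`. Conversely `ψ ≤ h` for `h(i) = C (z/2)^i`, which satisfies
`Ph ≤ ρ h` with `ρ = 4(z-1)/z² < 1`; hence `ψ ≤ ∑_{k<K} Pᵏ c + Pᴷ ψ ≤ ∑_{k<K} Pᵏ c + ρᴷ h`, and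
`ψ ≤ φ` in the limit. The solution `ψ` is found among combinations of geometric sequences,
which each row of `P` maps to geometric sequences. -/

noncomputable def potentialPartial (P : ℕ → ℕ → ℝ≥0∞) (c : ℕ → ℝ≥0∞) (K i : ℕ) : ℝ≥0∞ :=
  ∑ k ∈ Finset.range K, ∑' j, matPow P k i j * c j

section Potential

variable {P : ℕ → ℕ → ℝ≥0∞} {c : ℕ → ℝ≥0∞}

theorem matPow_succ' (k i j : ℕ) : matPow P (k + 1) i j = ∑' l, P i l * matPow P k l j := by
  induction k generalizing i j with
  | zero => simp [matPow]
  | succ k ih =>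
    calc matPow P (k + 2) i j = ∑' l, (∑' m, P i m * matPow P k m l) * P l j := by
          rw [matPow]; exact tsum_congr fun l => by rw [ih]
      _ = ∑' m, ∑' l, P i m * matPow P k m l * P l j := by
          simp only [← ENNReal.tsum_mul_right]; exact ENNReal.tsum_comm
      _ = ∑' m, P i m * matPow P (k + 1) m j := by
          simp only [matPow, ← ENNReal.tsum_mul_left, mul_assoc]

theorem tsum_matPow_zero_mul (i : ℕ) : ∑' j, matPow P 0 i j * c j = c i := by
  simp [matPow]

theorem tsum_matPow_succ_mul (k i : ℕ) :
    ∑' j, matPow P (k + 1) i j * c j = ∑' l, P i l * ∑' j, matPow P k l j * c j := by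
  simp only [matPow_succ', ← ENNReal.tsum_mul_right, ← ENNReal.tsum_mul_left, mul_assoc]
  exact ENNReal.tsum_comm

theorem tendsto_potentialPartial (i : ℕ) :
    Tendsto (fun K => potentialPartial P c K i) atTop (𝓝 (potential P c i)) :=
  ENNReal.tendsto_nat_tsum _

theorem potentialPartial_succ (K i : ℕ) :
    potentialPartial P c (K + 1) i = c i + ∑' l, P i l * potentialPartial P c K l := by
  simp only [potentialPartial, Finset.sum_range_succ', tsum_matPow_zero_mul,
    tsum_matPow_succ_mul, Finset.mul_sum]
  rw [add_comm, Summable.tsum_finsetSum fun _ _ => ENNReal.summable]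

theorem potential_le_of_supersolution {ψ : ℕ → ℝ≥0∞}
    (hψ : ∀ i, c i + ∑' j, P i j * ψ j ≤ ψ i) (i : ℕ) : potential P c i ≤ ψ i := by
  have partial_le : ∀ K i, potentialPartial P c K i ≤ ψ i := by
    intro K
    induction K with
    | zero => simp [potentialPartial]
    | succ K ih =>
      intro i
      rw [potentialPartial_succ]
      exact le_trans (by gcongr with l; exact ih l) (hψ i)
  exact le_of_tendsto' (tendsto_potentialPartial i) fun K => partial_le K i

theorem le_potential_of_subsolution {ψ h : ℕ → ℝ≥0∞} {ρ : ℝ≥0∞}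
    (hψ : ∀ i, ψ i ≤ c i + ∑' j, P i j * ψ j) (hψh : ∀ i, ψ i ≤ h i)
    (hh : ∀ i, ∑' j, P i j * h j ≤ ρ * h i) (hρ : ρ < 1) {i : ℕ} (hi : h i ≠ ∞) :
    ψ i ≤ potential P c i := by
  have le_partial : ∀ K i, ψ i ≤ potentialPartial P c K i + ρ ^ K * h i := by
    intro K
    induction K with
    | zero => simpa [potentialPartial] using hψh
    | succ K ih =>
      intro i
      calc ψ i ≤ c i + ∑' j, P i j * (potentialPartial P c K j + ρ ^ K * h j) := by
            refine (hψ i).trans ?_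
            gcongr with j
            exact ih j
        _ = c i + ∑' j, P i j * potentialPartial P c K j + ρ ^ K * ∑' j, P i j * h j := by
            simp only [mul_add, ENNReal.tsum_add, mul_left_comm _ (ρ ^ K),
              ENNReal.tsum_mul_left, add_assoc]
        _ ≤ potentialPartial P c (K + 1) i + ρ ^ (K + 1) * h i := by
            rw [potentialPartial_succ, pow_succ, mul_assoc]
            gcongr
            exact hh i
  have hlim : Tendsto (fun K => potentialPartial P c K i + ρ ^ K * h i) atTop
      (𝓝 (potential P c i)) := by
    simpa using (tendsto_potentialPartial i).add
      (ENNReal.Tendsto.mul_const (ENNReal.tendsto_pow_atTop_nhds_zero_of_lt_one hρ) (.inr hi))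
  exact ge_of_tendsto' hlim fun K => le_partial K i

end Potential

theorem mG1_of_lt_pred {z : ℝ} {i j : ℕ} (h : j < i - 1) : mG1 z i j = 0 := by
  unfold mG1
  split_ifs <;> first | rfl | omega

theorem mG1_add_pred (z : ℝ) (i m : ℕ) :
    mG1 z i (m + (i - 1)) = ENNReal.ofReal ((z - 1) / z ^ (m + 1)) := by
  unfold mG1
  split_ifs with hi hle
  · simp [hi]
  · rw [Nat.add_sub_cancel]
  · omega

theorem tsum_mG1_mul_ofReal {z : ℝ} (hz : 1 ≤ z) (i : ℕ) {g : ℕ → ℝ} {s : ℝ}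
    (hg : ∀ j, 0 ≤ g j) (hs : HasSum (fun m => g (m + (i - 1)) / z ^ (m + 1)) s) :
    ∑' j, mG1 z i j * ENNReal.ofReal (g j) = ENNReal.ofReal ((z - 1) * s) := by
  rw [← ENNReal.summable.sum_add_tsum_nat_add' (k := i - 1),
    Finset.sum_eq_zero fun j hj => by rw [mG1_of_lt_pred (Finset.mem_range.1 hj), zero_mul],
    zero_add, ← hs.tsum_eq, ← tsum_mul_left,
    ENNReal.ofReal_tsum_of_nonneg (fun m => by have := hg (m + (i - 1)); positivity)
      (hs.summable.mul_left _)]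
  refine tsum_congr fun m => ?_
  rw [mG1_add_pred, ← ENNReal.ofReal_mul (by have := hg (m + (i - 1)); positivity), mul_div,
    div_mul_eq_mul_div]

theorem hasSum_pow_add_div_pow_succ {z r : ℝ} (hr : |r| < z) (d : ℕ) :
    HasSum (fun m => r ^ (m + d) / z ^ (m + 1)) (r ^ d / (z - r)) := by
  have hz : 0 < z := (abs_nonneg r).trans_lt hr
  have hzr : z - r ≠ 0 := by linarith [le_abs_self r]
  have hq : |r / z| < 1 := by rwa [abs_div, abs_of_pos hz, div_lt_one hz]
  have hsum : r ^ d / (z - r) = r ^ d / z * (1 - r / z)⁻¹ := by field_simp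
  rw [hsum]
  refine ((hasSum_geometric_of_abs_lt_one hq).mul_left _).congr_fun fun m => ?_
  rw [div_pow, pow_add, pow_succ]
  field_simp

noncomputable def mG1Cost (z : ℝ) (j : ℕ) : ℝ := if j = 0 then 0 else ((z - 1) / z) ^ j

/-- For `i ≥ 1`, `r ^ i` is `mG1 z`-harmonic iff `r (z - r) = z - 1`, i.e. `r ∈ {1, z - 1}`.
The candidate is the particular solution `∝ ((z - 1) / z) ^ i` plus the multiple of `(z - 1) ^ i`
that also solves the equation at the boundary state `0`. -/
noncomputable def mG1Potential (z : ℝ) (i : ℕ) : ℝ :=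
  ((z - 1) ^ i / (2 - z) - (z ^ 2 - z + 1) * ((z - 1) / z) ^ i) / (z - 1)

section MG1Potential

variable {z : ℝ}

theorem ofReal_mG1Cost (z : ℝ) : (fun j => ENNReal.ofReal (mG1Cost z j)) =
    fun j => if j = 0 then 0 else ENNReal.ofReal (((z - 1) / z) ^ j) := by
  funext j
  unfold mG1Cost
  split_ifs <;> simp

theorem mG1Cost_nonneg (hz : 1 ≤ z) (j : ℕ) : 0 ≤ mG1Cost z j := by
  unfold mG1Cost
  split_ifs
  · rfl
  · exact pow_nonneg (div_nonneg (by linarith) (by linarith)) j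

theorem mG1Potential_nonneg (hz1 : 1 < z) (hz2 : z < 2) (i : ℕ) : 0 ≤ mG1Potential z i := by
  have h2z : 0 < 2 - z := by linarith
  have hβ : z ^ 2 - z + 1 ≤ 1 / (2 - z) := by
    rw [le_div_iff₀ h2z]
    nlinarith [pow_pos (sub_pos.2 hz1) 3]
  have hzi : 1 ≤ z ^ i := one_le_pow₀ hz1.le
  have hpow : 0 ≤ (z - 1) ^ i := pow_nonneg (by linarith) i
  refine div_nonneg (sub_nonneg.2 ?_) (by linarith)
  calc (z ^ 2 - z + 1) * ((z - 1) / z) ^ i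
      ≤ (z ^ 2 - z + 1) * (z - 1) ^ i := by
        rw [div_pow]
        gcongr
        · nlinarith
        · exact div_le_self hpow hzi
    _ ≤ 1 / (2 - z) * (z - 1) ^ i := by gcongr
    _ = (z - 1) ^ i / (2 - z) := by ring

theorem hasSum_mG1Potential_add_div_pow_succ (hz1 : 1 < z) (d : ℕ) :
    HasSum (fun m => mG1Potential z (m + d) / z ^ (m + 1))
      (((z - 1) ^ d / (2 - z) - z * ((z - 1) / z) ^ d) / (z - 1)) := by
  have hz0 : 0 < z := by linarith
  have hβ : z ^ 2 - z + 1 ≠ 0 := by nlinarith [sq_nonneg (z - 1)]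
  have hr : |z - 1| < z := by rw [abs_of_pos (by linarith)]; linarith
  have hw : |(z - 1) / z| < z := by
    rw [abs_of_pos (by positivity), div_lt_iff₀ hz0]
    nlinarith
  have h := (((hasSum_pow_add_div_pow_succ hr d).div_const (2 - z)).sub
    ((hasSum_pow_add_div_pow_succ hw d).mul_left (z ^ 2 - z + 1))).div_const (z - 1)
  have hzw : z - (z - 1) / z = (z ^ 2 - z + 1) / z := by field_simp; ring
  have hval : (z ^ 2 - z + 1) * (((z - 1) / z) ^ d / ((z ^ 2 - z + 1) / z)) =
      z * ((z - 1) / z) ^ d := by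
    rw [div_div_eq_mul_div, mul_div_assoc', mul_div_cancel_left₀ _ hβ, mul_comm]
  rw [sub_sub_cancel, div_one, hzw, hval] at h
  refine h.congr_fun fun m => ?_
  unfold mG1Potential
  ring

theorem mG1Potential_sub_mG1Cost (hz1 : 1 < z) (hz2 : z < 2) (i : ℕ) :
    mG1Potential z i - mG1Cost z i = (z - 1) ^ (i - 1) / (2 - z) - z * ((z - 1) / z) ^ (i - 1) := by
  have hz1' : z - 1 ≠ 0 := by linarith
  have h2z : 2 - z ≠ 0 := by linarith
  unfold mG1Potential mG1Cost
  cases i with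
  | zero =>
    simp only [pow_zero, mul_one, if_true, sub_zero, Nat.zero_sub]
    field_simp
    ring
  | succ d =>
    simp only [Nat.succ_ne_zero, if_false, Nat.add_sub_cancel, pow_succ, div_pow]
    field_simp
    ring

theorem mG1Cost_add_tsum_mG1_mul_mG1Potential (hz1 : 1 < z) (hz2 : z < 2) (i : ℕ) :
    ENNReal.ofReal (mG1Cost z i) + ∑' j, mG1 z i j * ENNReal.ofReal (mG1Potential z j) =
      ENNReal.ofReal (mG1Potential z i) := by
  have hs := hasSum_mG1Potential_add_div_pow_succ hz1 (i - 1)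
  have hrow : 0 ≤ mG1Potential z i - mG1Cost z i := by
    rw [mG1Potential_sub_mG1Cost hz1 hz2, ← mul_div_cancel₀ (_ - _) (sub_ne_zero.2 hz1.ne')]
    refine mul_nonneg (by linarith) (hs.nonneg fun m => ?_)
    have := mG1Potential_nonneg hz1 hz2 (m + (i - 1))
    positivity
  rw [tsum_mG1_mul_ofReal hz1.le i (mG1Potential_nonneg hz1 hz2) hs,
    mul_div_cancel₀ _ (sub_ne_zero.2 hz1.ne'), ← mG1Potential_sub_mG1Cost hz1 hz2,
    ← ENNReal.ofReal_add (mG1Cost_nonneg hz1.le i) hrow, add_sub_cancel]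

theorem tsum_mG1_mul_pow_half_le (hz1 : 1 < z) (hz2 : z < 2) {C : ℝ} (hC : 0 ≤ C) (i : ℕ) :
    ∑' j, mG1 z i j * ENNReal.ofReal (C * (z / 2) ^ j) ≤
      ENNReal.ofReal (4 * (z - 1) / z ^ 2) * ENNReal.ofReal (C * (z / 2) ^ i) := by
  have hz0 : 0 < z := by linarith
  have hr : |z / 2| < z := by rw [abs_of_pos (by positivity)]; linarith
  have hs := (hasSum_pow_add_div_pow_succ hr (i - 1)).mul_left C
  simp only [← mul_div_assoc] at hs
  rw [tsum_mG1_mul_ofReal (g := fun j => C * (z / 2) ^ j) hz1.le i (fun j => by positivity) hs,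
    ← ENNReal.ofReal_mul (div_nonneg (by linarith) (by positivity))]
  refine ENNReal.ofReal_le_ofReal ?_
  cases i with
  | zero =>
    have hgap : 4 * (z - 1) / z ^ 2 * (C * (z / 2) ^ 0) - (z - 1) * (C * (z / 2) ^ 0 / (z - z / 2))
        = 2 * (z - 1) * (2 - z) * C / z ^ 2 := by
      field_simp
      ring
    have : 0 ≤ 2 * (z - 1) * (2 - z) * C / z ^ 2 := by
      have : 0 ≤ (z - 1) * (2 - z) := by nlinarith
      positivity
    linarith
  | succ d =>
    rw [Nat.add_sub_cancel]
    refine le_of_eq ?_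
    field_simp
    ring

theorem mG1Potential_le (hz1 : 1 < z) (hz2 : z < 2) (i : ℕ) :
    mG1Potential z i ≤ ((2 - z) * (z - 1))⁻¹ * (z / 2) ^ i := by
  have hβ : 0 ≤ (z ^ 2 - z + 1) * ((z - 1) / z) ^ i := by
    have : 0 ≤ z ^ 2 - z + 1 := by nlinarith
    positivity
  calc mG1Potential z i ≤ (z - 1) ^ i / (2 - z) / (z - 1) := by
        unfold mG1Potential
        gcongr
        linarith
    _ ≤ (z / 2) ^ i / (2 - z) / (z - 1) := by
        gcongr
        linarith
    _ = ((2 - z) * (z - 1))⁻¹ * (z / 2) ^ i := by rw [mul_inv]; ring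

theorem mG1Potential_eq (hz : z - 1 ≠ 0) (i : ℕ) :
    mG1Potential z i = (1 / (2 - z) - (z ^ 2 - z + 1) / z ^ i) * (z - 1) ^ ((i : ℤ) - 1) := by
  rw [zpow_sub_one₀ hz, zpow_natCast, mG1Potential, div_pow]
  ring

end MG1Potential

theorem mG1_potential_formula (z : ℝ) (hz1 : 1 < z) (hz2 : z < 2) :
    ∀ i : ℕ,
      potential (mG1 z)
          (fun j => if j = 0 then 0 else ENNReal.ofReal (((z - 1) / z) ^ j)) i ≠ ∞ ∧
      (potential (mG1 z)
          (fun j => if j = 0 then 0 else ENNReal.ofReal (((z - 1) / z) ^ j)) i).toReal =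
        (1 / (2 - z) - (z ^ 2 - z + 1) / z ^ i) * (z - 1) ^ ((i : ℤ) - 1) := by
  intro i
  have hC : 0 ≤ ((2 - z) * (z - 1))⁻¹ := inv_nonneg.2 (mul_nonneg (by linarith) (by linarith))
  have hρ : ENNReal.ofReal (4 * (z - 1) / z ^ 2) < 1 := by
    rw [ENNReal.ofReal_lt_one, div_lt_one (by positivity)]
    nlinarith [sq_pos_of_ne_zero (sub_ne_zero.2 hz2.ne)]
  have hfixed := mG1Cost_add_tsum_mG1_mul_mG1Potential hz1 hz2
  have hpot : potential (mG1 z) (fun j => ENNReal.ofReal (mG1Cost z j)) i =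
      ENNReal.ofReal (mG1Potential z i) :=
    le_antisymm (potential_le_of_supersolution (fun j => (hfixed j).le) i)
      (le_potential_of_subsolution (fun j => (hfixed j).ge)
        (fun j => ENNReal.ofReal_le_ofReal (mG1Potential_le hz1 hz2 j))
        (tsum_mG1_mul_pow_half_le hz1 hz2 hC) hρ ENNReal.ofReal_ne_top)
  rw [← ofReal_mG1Cost, hpot, ENNReal.toReal_ofReal (mG1Potential_nonneg hz1 hz2 i),
    mG1Potential_eq (sub_ne_zero.2 hz1.ne')]
  exact ⟨ENNReal.ofReal_ne_top, rfl⟩
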